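/- Let A be a real vector space with a modular ρ satisfying the Δ₂-condition with constant k > 0 such that A_ρ is complete, let P be a cone in A_ρ that is normal with normal constant c > 0, and define σ(x) = inf_{y ≼ x} ρ(y) + inf_{x ≼ z} ρ(z) for x ∈ A_ρ. Then σ satisfies the Δ₂-condition with the same constant k: σ(2x) ≤ kσ(x) for all x ∈ A_ρ. -/

import Mathlib

open Filter Topology

/-- `ρ` is a modular on the real vector space `A`. -/
def IsModular {A : Type*} [AddCommGroup A] [Module ℝ A] (ρ : A → ℝ) : Prop :=
  (∀ x : A, ρ x = 0 ↔ x = 0) ∧ (∀ x : A, ρ (-x) = ρ x) ∧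
  ∀ (x y : A) (a b : ℝ), 0 ≤ a → 0 ≤ b → a + b = 1 → ρ (a • x + b • y) ≤ ρ x + ρ y

/-- The Δ₂-condition for `ρ` with constant `k`. -/
def SatisfiesDelta2 {A : Type*} [AddCommGroup A] [Module ℝ A] (ρ : A → ℝ) (k : ℝ) : Prop :=
  0 < k ∧ ∀ x : A, ρ ((2 : ℝ) • x) ≤ k * ρ x

/-- Every vector of `A` lies in the modular space `A_ρ`, i.e. `ρ (α • x) → 0` as `α → 0`. -/
def IsModularSpace {A : Type*} [AddCommGroup A] [Module ℝ A] (ρ : A → ℝ) : Prop :=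
  ∀ x : A, Tendsto (fun t : ℝ => ρ (t • x)) (𝓝 0) (𝓝 0)

/-- `A_ρ` is ρ-complete: every ρ-Cauchy sequence ρ-converges. -/
def RhoComplete {A : Type*} [AddCommGroup A] [Module ℝ A] (ρ : A → ℝ) : Prop :=
  ∀ u : ℕ → A,
    (∀ ε > (0 : ℝ), ∃ N : ℕ, ∀ m ≥ N, ∀ n ≥ N, ρ (u m - u n) < ε) →
    ∃ x : A, Tendsto (fun n => ρ (u n - x)) atTop (𝓝 0)

/-- A set is ρ-closed if it contains limits of its ρ-convergent sequences. -/
def RhoClosed {A : Type*} [AddCommGroup A] [Module ℝ A] (ρ : A → ℝ) (S : Set A) : Prop :=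
  ∀ (u : ℕ → A) (x : A), (∀ n, u n ∈ S) →
    Tendsto (fun n => ρ (u n - x)) atTop (𝓝 0) → x ∈ S

/-- `P` is a cone in `A_ρ`. -/
def IsCone {A : Type*} [AddCommGroup A] [Module ℝ A] (ρ : A → ℝ) (P : Set A) : Prop :=
  RhoClosed ρ P ∧ P.Nonempty ∧ P ≠ {0} ∧
  (∀ (a b : ℝ), 0 ≤ a → 0 ≤ b → ∀ x ∈ P, ∀ y ∈ P, a • x + b • y ∈ P) ∧
  (∀ x : A, x ∈ P → -x ∈ P → x = 0)

/-- The partial order induced by the cone `P`: `x ≼ y` iff `y - x ∈ P`. -/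
def coneLE {A : Type*} [AddCommGroup A] [Module ℝ A] (P : Set A) (x y : A) : Prop :=
  y - x ∈ P

/-- `P` is normal with normal constant `c`: `0 ≼ x ≼ y` implies `ρ x ≤ c * ρ y`. -/
def IsNormalCone {A : Type*} [AddCommGroup A] [Module ℝ A]
    (ρ : A → ℝ) (P : Set A) (c : ℝ) : Prop :=
  ∀ x y : A, x ∈ P → coneLE P x y → ρ x ≤ c * ρ y

/-- The modular `σ(x) = inf_{y ≼ x} ρ(y) + inf_{x ≼ z} ρ(z)`. -/
noncomputable def sigmaModular {A : Type*} [AddCommGroup A] [Module ℝ A]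
    (ρ : A → ℝ) (P : Set A) (x : A) : ℝ :=
  sInf (ρ '' {y | coneLE P y x}) + sInf (ρ '' {z | coneLE P x z})

/-! Doubling preserves `≼`, so it maps `{y | y ≼ x}` into `{y | y ≼ 2x}` and `{z | x ≼ z}` into
`{z | 2x ≼ z}`; hence `ρ(2y) ≤ kρ(y)` passes to both infima, which are finite because `ρ ≥ 0`
and `x` lies in both sets. -/

lemma csInf_image_le_mul_csInf_image {α β : Type*} {f : α → ℝ} {g : β → ℝ} {t : Set α}
    {s : Set β} {k : ℝ} (hk : 0 < k) (hs : s.Nonempty) (hf : BddBelow (f '' t))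
    (h : ∀ b ∈ s, ∃ a ∈ t, f a ≤ k * g b) :
    sInf (f '' t) ≤ k * sInf (g '' s) := by
  rw [← div_le_iff₀' hk]
  refine le_csInf (hs.image g) ?_
  rintro _ ⟨b, hb, rfl⟩
  obtain ⟨a, ha, hab⟩ := h b hb
  rw [div_le_iff₀' hk]
  exact (csInf_le hf (Set.mem_image_of_mem f ha)).trans hab

section

variable {A : Type*} [AddCommGroup A] [Module ℝ A] {ρ : A → ℝ}

lemma IsModular.nonneg (hmod : IsModular ρ) (x : A) : 0 ≤ ρ x := by
  have h := hmod.2.2 x x (1 / 2) (1 / 2) (by norm_num) (by norm_num) (by norm_num)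
  rw [← add_smul, show (1 / 2 + 1 / 2 : ℝ) = 1 by norm_num, one_smul] at h
  linarith

lemma IsModular.bddBelow_image (hmod : IsModular ρ) (s : Set A) : BddBelow (ρ '' s) :=
  ⟨0, by rintro _ ⟨x, -, rfl⟩; exact hmod.nonneg x⟩

variable {P : Set A}

lemma IsCone.zero_mem (hP : IsCone ρ P) : (0 : A) ∈ P := by
  obtain ⟨p, hp⟩ := hP.2.1
  simpa using hP.2.2.2.1 0 0 le_rfl le_rfl p hp p hp

lemma IsCone.coneLE_refl (hP : IsCone ρ P) (x : A) : coneLE P x x := by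
  simpa [coneLE] using hP.zero_mem

lemma IsCone.coneLE_smul (hP : IsCone ρ P) {a : ℝ} (ha : 0 ≤ a) {y z : A}
    (h : coneLE P y z) : coneLE P (a • y) (a • z) := by
  have hmem := hP.2.2.2.1 a 0 ha le_rfl (z - y) h 0 hP.zero_mem
  rwa [smul_zero, add_zero, smul_sub] at hmem

end

theorem sigma_delta2_general
    {A : Type*} [AddCommGroup A] [Module ℝ A] (ρ : A → ℝ)
    (hmod : IsModular ρ) (k : ℝ) (hΔ₂ : SatisfiesDelta2 ρ k)
    (P : Set A) (hP : IsCone ρ P) :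
    ∀ x : A, sigmaModular ρ P ((2 : ℝ) • x) ≤ k * sigmaModular ρ P x := by
  obtain ⟨hk, hΔ⟩ := hΔ₂
  intro x
  have hdouble {y z : A} (h : coneLE P y z) : coneLE P ((2 : ℝ) • y) ((2 : ℝ) • z) :=
    hP.coneLE_smul zero_le_two h
  have lower := csInf_image_le_mul_csInf_image hk ⟨x, hP.coneLE_refl x⟩
    (hmod.bddBelow_image {y | coneLE P y ((2 : ℝ) • x)}) fun y hy => ⟨_, hdouble hy, hΔ y⟩
  have upper := csInf_image_le_mul_csInf_image hk ⟨x, hP.coneLE_refl x⟩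
    (hmod.bddBelow_image {z | coneLE P ((2 : ℝ) • x) z}) fun z hz => ⟨_, hdouble hz, hΔ z⟩
  rw [sigmaModular, sigmaModular, mul_add]
  exact add_le_add lower upper

/-- `σ` satisfies the Δ₂-condition with the same constant `k`. -/
theorem sigma_delta2
    {A : Type*} [AddCommGroup A] [Module ℝ A] (ρ : A → ℝ)
    (hmod : IsModular ρ) (k : ℝ) (hΔ₂ : SatisfiesDelta2 ρ k)
    (hms : IsModularSpace ρ) (hcomplete : RhoComplete ρ)
    (P : Set A) (hP : IsCone ρ P)
    (c : ℝ) (hc : 0 < c) (hnormal : IsNormalCone ρ P c) :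
    ∀ x : A, sigmaModular ρ P ((2 : ℝ) • x) ≤ k * sigmaModular ρ P x :=
  sigma_delta2_general ρ hmod k hΔ₂ P hP
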